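/- If P(H) > 0, P(K) > 0, P(A∩H) > 0, and K ⊆ B, then the iterated conditional satisfies ⟦(B|K)|(A|H)⟧(ω) = 1 for every ω ∈ Ω; in particular its prevision μ equals 1. -/

import Mathlib

open MeasureTheory Set
open scoped Classical

noncomputable section

variable {Ω : Type*} [MeasurableSpace Ω]

/-- Indicator (with values in `ℝ`) of a set. -/
def ind (A : Set Ω) : Ω → ℝ := A.indicator 1

/-- Conditional probability `P(A|H) = P(A ∩ H)/P(H)`. -/
def condProb (P : Measure Ω) (A H : Set Ω) : ℝ :=
  (P (A ∩ H)).toReal / (P H).toReal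

/-- The (indicator of the) conditional event `A|H`,
`⟦A|H⟧ = 1_{A∩H} + P(A|H)·1_{Hᶜ}`. -/
def condEvent (P : Measure Ω) (A H : Set Ω) : Ω → ℝ :=
  fun ω => ind (A ∩ H) ω + condProb P A H * ind Hᶜ ω

/-- The prevision `z` of the conjunction `(A|H) ∧ (B|K)`:
`z = E[min(⟦A|H⟧, ⟦B|K⟧)·1_{H∪K}]/P(H∪K)`. -/
def conjPrev (P : Measure Ω) (A H B K : Set Ω) : ℝ :=
  (∫ ω, min (condEvent P A H ω) (condEvent P B K ω) * ind (H ∪ K) ω ∂P) /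
    (P (H ∪ K)).toReal

/-- The conjunction `⟦(A|H) ∧ (B|K)⟧ = min(⟦A|H⟧, ⟦B|K⟧)·1_{H∪K} + z·1_{(H∪K)ᶜ}`. -/
def conjCE (P : Measure Ω) (A H B K : Set Ω) : Ω → ℝ :=
  fun ω => min (condEvent P A H ω) (condEvent P B K ω) * ind (H ∪ K) ω
    + conjPrev P A H B K * ind (H ∪ K)ᶜ ω

/-- The iterated conditional `⟦(B|K)|(A|H)⟧ = ⟦(A|H)∧(B|K)⟧ + μ·(1 − ⟦A|H⟧)`,
with `μ = z / P(A|H)`. -/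
def iterCond (P : Measure Ω) (A H B K : Set Ω) : Ω → ℝ :=
  fun ω => conjCE P A H B K ω +
    (conjPrev P A H B K / condProb P A H) * (1 - condEvent P A H ω)

/-- Goodman–Nguyen logical implication between conditional events:
`A|H ⊑ B|K` iff `A∩H ⊆ B∩K` and `Bᶜ∩K ⊆ Aᶜ∩H`. -/
def GNle (A H B K : Set Ω) : Prop := A ∩ H ⊆ B ∩ K ∧ Bᶜ ∩ K ⊆ Aᶜ ∩ H

/-! Since `K ⊆ B`, the conditional event `B|K` is constantly `1`, so the conjunction
`(A|H) ∧ (B|K)` is `A|H` on `H ∪ K`. Coherence of `P(A|H)` on `H ∪ K ⊇ H` gives `z = P(A|H)`,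
hence `μ = 1`; and off `H ∪ K` the conditional event `A|H` already takes the value `P(A|H) = z`.
So `⟦(A|H) ∧ (B|K)⟧ = ⟦A|H⟧` and `⟦(B|K)|(A|H)⟧ = ⟦A|H⟧ + (1 - ⟦A|H⟧) = 1`. -/

lemma ind_of_mem {α : Type*} {s : Set α} {a : α} (h : a ∈ s) : ind s a = 1 :=
  Set.indicator_of_mem h 1

lemma ind_of_notMem {α : Type*} {s : Set α} {a : α} (h : a ∉ s) : ind s a = 0 :=
  Set.indicator_of_notMem h 1

section Lemmas

variable {P : Measure Ω} {A H B K S : Set Ω} {ω : Ω}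

lemma integral_ind (hS : MeasurableSet S) : ∫ ω, ind S ω ∂P = (P S).toReal :=
  integral_indicator_one hS

lemma condEvent_of_notMem (h : ω ∉ H) : condEvent P A H ω = condProb P A H := by
  simp [condEvent, ind_of_notMem (fun h' : ω ∈ A ∩ H => h h'.2), ind_of_mem (mem_compl h)]

lemma condEvent_mul_ind_of_subset (hHS : H ⊆ S) :
    condEvent P A H ω * ind S ω = ind (A ∩ H) ω + condProb P A H * ind (S \ H) ω := by
  by_cases hH : ω ∈ H
  · by_cases hA : ω ∈ A <;> simp [condEvent, ind, Set.indicator, hA, hH, hHS hH]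
  · by_cases hS : ω ∈ S <;> simp [condEvent, ind, Set.indicator, hH, hS]

variable [IsFiniteMeasure P]

lemma condProb_le_one : condProb P A H ≤ 1 :=
  div_le_one_of_le₀ (ENNReal.toReal_mono (measure_ne_top _ _) (measure_mono inter_subset_right))
    ENNReal.toReal_nonneg

lemma condProb_pos (hAH : 0 < P (A ∩ H)) : 0 < condProb P A H :=
  div_pos (ENNReal.toReal_pos hAH.ne' (measure_ne_top _ _))
    (ENNReal.toReal_pos (hAH.trans_le (measure_mono inter_subset_right)).ne' (measure_ne_top _ _))

lemma condProb_eq_one_of_subset (hK : P K ≠ 0) (hKB : K ⊆ B) : condProb P B K = 1 := by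
  rw [condProb, inter_eq_right.mpr hKB]
  exact div_self (ENNReal.toReal_pos hK (measure_ne_top _ _)).ne'

-- Holds also when `P H = 0`, since then `P (A ∩ H) = 0` too.
lemma condProb_mul_measure : condProb P A H * (P H).toReal = (P (A ∩ H)).toReal := by
  rcases eq_or_ne (P H).toReal 0 with h | h
  · have hAH : (P (A ∩ H)).toReal ≤ (P H).toReal :=
      ENNReal.toReal_mono (measure_ne_top _ _) (measure_mono inter_subset_right)
    rw [h, mul_zero]
    exact (hAH.trans h.le).antisymm ENNReal.toReal_nonneg |>.symm
  · exact div_mul_cancel₀ _ h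

lemma condEvent_le_one : condEvent P A H ω ≤ 1 := by
  by_cases hH : ω ∈ H
  · by_cases hA : ω ∈ A <;>
      simp [condEvent, ind, Set.indicator, hA, hH]
  · exact (condEvent_of_notMem hH).trans_le condProb_le_one

lemma condEvent_eq_one_of_subset (hK : P K ≠ 0) (hKB : K ⊆ B) : condEvent P B K ω = 1 := by
  by_cases h : ω ∈ K
  · rw [condEvent, ind_of_mem (show ω ∈ B ∩ K from ⟨hKB h, h⟩),
      ind_of_notMem (notMem_compl_iff.mpr h), mul_zero, add_zero]
  · rw [condEvent_of_notMem h, condProb_eq_one_of_subset hK hKB]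

-- Coherence of `P(A|H)` on every event containing `H`.
lemma integral_condEvent_mul_ind_of_subset (hA : MeasurableSet A) (hH : MeasurableSet H)
    (hS : MeasurableSet S) (hHS : H ⊆ S) :
    ∫ ω, condEvent P A H ω * ind S ω ∂P = condProb P A H * (P S).toReal := by
  have hSH : (P H).toReal + (P (S \ H)).toReal = (P S).toReal := by
    simpa [Measure.real, union_eq_right.mpr hHS] using measureReal_add_sdiff (μ := P) hH (t := S)
  calc ∫ ω, condEvent P A H ω * ind S ω ∂P
      = ∫ ω, ind (A ∩ H) ω + condProb P A H * ind (S \ H) ω ∂P :=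
        integral_congr_ae (.of_forall fun _ => condEvent_mul_ind_of_subset hHS)
    _ = (P (A ∩ H)).toReal + condProb P A H * (P (S \ H)).toReal := by
        rw [integral_add ((integrable_const 1).indicator (hA.inter hH))
          (((integrable_const 1).indicator (hS.diff hH)).const_mul _),
          integral_const_mul, integral_ind (hA.inter hH), integral_ind (hS.diff hH)]
    _ = condProb P A H * (P S).toReal := by
        rw [← condProb_mul_measure, ← hSH]; ring

lemma conjPrev_eq_condProb (hA : MeasurableSet A) (hH : MeasurableSet H) (hK : MeasurableSet K)
    (hBK : ∀ ω, condEvent P B K ω = 1) : conjPrev P A H B K = condProb P A H := by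
  simp only [conjPrev, hBK, min_eq_left condEvent_le_one]
  rw [integral_condEvent_mul_ind_of_subset hA hH (hH.union hK) subset_union_left]
  rcases eq_or_ne (P (H ∪ K)).toReal 0 with h | h
  · have hH0 : (P H).toReal = 0 := le_antisymm
      (h ▸ ENNReal.toReal_mono (measure_ne_top _ _) (measure_mono subset_union_left))
      ENNReal.toReal_nonneg
    rw [h, div_zero, condProb, hH0, div_zero]
  · exact mul_div_cancel_right₀ _ h

lemma conjCE_eq_condEvent (hBK : ∀ ω, condEvent P B K ω = 1)
    (hz : conjPrev P A H B K = condProb P A H) : conjCE P A H B K ω = condEvent P A H ω := by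
  rw [conjCE, hBK, min_eq_left condEvent_le_one, hz]
  by_cases h : ω ∈ H ∪ K
  · rw [ind_of_mem h, ind_of_notMem (notMem_compl_iff.mpr h)]
    ring
  · rw [ind_of_notMem h, ind_of_mem h, condEvent_of_notMem fun hH => h (Or.inl hH)]
    ring

end Lemmas

theorem iterCond_eq_one_of_subset_general (P : Measure Ω) [IsProbabilityMeasure P]
    (A H B K : Set Ω)
    (hAm : MeasurableSet A) (hHm : MeasurableSet H)
    (hKm : MeasurableSet K)
    (hK : 0 < P K) (hAH : 0 < P (A ∩ H))
    (hKB : K ⊆ B) :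
    (∀ ω, iterCond P A H B K ω = 1) ∧
      conjPrev P A H B K / condProb P A H = 1 := by
  have hBK : ∀ ω, condEvent P B K ω = 1 := fun _ => condEvent_eq_one_of_subset hK.ne' hKB
  have hz : conjPrev P A H B K = condProb P A H := conjPrev_eq_condProb hAm hHm hKm hBK
  have hμ : conjPrev P A H B K / condProb P A H = 1 := by
    rw [hz, div_self (condProb_pos hAH).ne']
  refine ⟨fun ω => ?_, hμ⟩
  rw [iterCond, hμ, conjCE_eq_condEvent hBK hz]
  ring

/-- If `P(A∩H) > 0` and `K ⊆ B`, then the iterated conditional `⟦(B|K)|(A|H)⟧`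
is constantly `1`; in particular its prevision `μ = z/P(A|H)` equals `1`. -/
theorem iterCond_eq_one_of_subset (P : Measure Ω) [IsProbabilityMeasure P]
    (A H B K : Set Ω)
    (hAm : MeasurableSet A) (hHm : MeasurableSet H)
    (hBm : MeasurableSet B) (hKm : MeasurableSet K)
    (hH : 0 < P H) (hK : 0 < P K) (hAH : 0 < P (A ∩ H))
    (hKB : K ⊆ B) :
    (∀ ω, iterCond P A H B K ω = 1) ∧
      conjPrev P A H B K / condProb P A H = 1 :=
  iterCond_eq_one_of_subset_general P A H B K hAm hHm hKm hK hAH hKB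

end
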